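/- arXiv:2406.03260 — 2 statements merged into one kernel-verified Lean document; each statement's English description precedes it below -/
import Mathlib

section
/- If λ ≠ 0 is an eigenvalue of the matrix (1_{N₀} ⊗ (s sᵀ)) K, where K is an (N₀·P)×(N₀·P) matrix indexed by pairs (i,μ) and s ∈ R^P, then λ is an eigenvalue of the N₀×N₀ matrix Σ_{μ,ν} s_μ s_ν K_{·,μν}, and any corresponding eigenvector v of the big matrix has the form v_{(i,μ)} = c_i s_μ for some c ∈ R^{N₀}. -/
open Matrix Kronecker

/-- Nonzero eigenvalues of `(1 ⊗ s sᵀ) K` come from the `N₀×N₀` matrix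
`Σ_{μ,ν} s_μ s_ν K_{·,μν}`, and each eigenvector factorizes as `v_{(i,μ)} = c_i s_μ`. -/
theorem stmt4 (N₀ P : ℕ)
    (K : Matrix (Fin N₀ × Fin P) (Fin N₀ × Fin P) ℝ)
    (s : Fin P → ℝ) (lam : ℝ) (hlam : lam ≠ 0)
    (v : Fin N₀ × Fin P → ℝ) (hv : v ≠ 0)
    (heig : (((1 : Matrix (Fin N₀) (Fin N₀) ℝ) ⊗ₖ vecMulVec s s) * K) *ᵥ v = lam • v) :
    ∃ c : Fin N₀ → ℝ, c ≠ 0 ∧ (∀ i μ, v (i, μ) = c i * s μ) ∧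
      (Matrix.of fun i j => ∑ μ : Fin P, ∑ ν : Fin P,
          s μ * s ν * K (i, μ) (j, ν)) *ᵥ c = lam • c := by
  classical
  set u : Fin N₀ × Fin P → ℝ := K *ᵥ v with hu
  set w : Fin N₀ → ℝ := fun i => ∑ ν, s ν * u (i, ν) with hw
  have hui : ∀ i μ, u (i, μ) = ∑ j, ∑ ν, K (i, μ) (j, ν) * v (j, ν) := by
    intro i μ
    rw [hu]
    simp [Matrix.mulVec, dotProduct, Fintype.sum_prod_type]
  have key : ∀ i μ, lam * v (i, μ) = s μ * w i := by
    intro i μ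
    have h := congrFun heig (i, μ)
    rw [← Matrix.mulVec_mulVec] at h
    simp only [Matrix.mulVec, dotProduct, Fintype.sum_prod_type,
      Matrix.kroneckerMap_apply, Matrix.one_apply, Matrix.vecMulVec_apply,
      Pi.smul_apply, smul_eq_mul, ite_mul, one_mul, zero_mul] at h
    rw [Finset.sum_eq_single i (fun b _ hb => by simp [Ne.symm hb])
      (fun h' => absurd (Finset.mem_univ i) h')] at h
    simp only [if_pos rfl, if_true] at h
    rw [← h, Finset.mul_sum]
    refine Finset.sum_congr rfl fun ν _ => ?_
    rw [hui i ν]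
    ring
  set c : Fin N₀ → ℝ := fun i => lam⁻¹ * w i with hc
  have hvc : ∀ i μ, v (i, μ) = c i * s μ := by
    intro i μ
    have h1 : v (i, μ) = lam⁻¹ * (lam * v (i, μ)) := by field_simp
    rw [h1, key i μ, hc]; ring
  refine ⟨c, ?_, hvc, ?_⟩
  · intro hc0
    apply hv
    funext p
    obtain ⟨i, μ⟩ := p
    rw [hvc i μ, show c i = 0 from congrFun hc0 i]
    simp
  · funext i
    show ∑ j, (∑ μ : Fin P, ∑ ν : Fin P, s μ * s ν * K (i, μ) (j, ν)) * c j
        = lam * c i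
    have hlw : lam * c i = w i := by rw [hc]; field_simp
    rw [hlw]
    have hwi : w i = ∑ μ, s μ * u (i, μ) := rfl
    rw [hwi]
    calc ∑ j, (∑ μ : Fin P, ∑ ν : Fin P, s μ * s ν * K (i, μ) (j, ν)) * c j
        = ∑ j, ∑ μ : Fin P, ∑ ν : Fin P, s μ * (K (i, μ) (j, ν) * (c j * s ν)) := by
          refine Finset.sum_congr rfl fun j _ => ?_
          rw [Finset.sum_mul]
          refine Finset.sum_congr rfl fun μ _ => ?_
          rw [Finset.sum_mul]
          exact Finset.sum_congr rfl fun ν _ => by ring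
      _ = ∑ μ : Fin P, ∑ j, ∑ ν : Fin P, s μ * (K (i, μ) (j, ν) * (c j * s ν)) :=
          Finset.sum_comm
      _ = ∑ μ, s μ * u (i, μ) := by
          refine Finset.sum_congr rfl fun μ _ => ?_
          rw [hui i μ, Finset.mul_sum]
          refine Finset.sum_congr rfl fun j _ => ?_
          rw [Finset.mul_sum]
          exact Finset.sum_congr rfl fun ν _ => by rw [hvc j ν]
end

section
/- Let Λ*(Q) = sup over D×D symmetric matrices A of [tr(QA) + (1/2) log det(1_D − 2A)], where the supremum ranges over A such that 1_D − 2A is positive definite. Then for any symmetric positive definite D×D matrix Q, Λ*(Q) = (1/2)(tr(Q) − log det(Q) − D). -/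
open Matrix

/-- For a positive definite real matrix `M`, `log det M + D ≤ trace M`. -/
lemma log_det_add_le_trace {D : ℕ} {M : Matrix (Fin D) (Fin D) ℝ} (hM : M.PosDef) :
    Real.log M.det + D ≤ M.trace := by
  have hH := hM.isHermitian
  have hev : ∀ i, 0 < hH.eigenvalues i := hM.eigenvalues_pos
  have hdet : M.det = ∏ i, hH.eigenvalues i := by
    simpa using hH.det_eq_prod_eigenvalues
  have htr : M.trace = ∑ i, hH.eigenvalues i := by
    conv_lhs => rw [hH.spectral_theorem]
    rw [Unitary.conjStarAlgAut_apply, trace_mul_cycle, Unitary.coe_star_mul_self, one_mul]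
    simp [trace_diagonal]
  have hlog : Real.log M.det = ∑ i, Real.log (hH.eigenvalues i) := by
    rw [hdet, Real.log_prod]
    exact fun i _ => (hev i).ne'
  rw [hlog, htr]
  have : (D : ℝ) = ∑ _i : Fin D, (1 : ℝ) := by simp
  rw [this, ← Finset.sum_add_distrib]
  refine Finset.sum_le_sum fun i _ => ?_
  have := Real.log_le_sub_one_of_pos (hev i)
  linarith

/-- PosDef is preserved under congruence by a hermitian matrix with nonzero determinant. -/
lemma posDef_conj {D : ℕ} {S B : Matrix (Fin D) (Fin D) ℝ} (hS : S.IsHermitian)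
    (hSdet : S.det ≠ 0) (hB : B.PosDef) : (S * B * S).PosDef := by
  rw [posDef_iff_dotProduct_mulVec]
  constructor
  · have : (S * B * S)ᴴ = Sᴴ * Bᴴ * Sᴴ := by
      rw [conjTranspose_mul, conjTranspose_mul, mul_assoc]
    rw [Matrix.IsHermitian, this, hS.eq, hB.isHermitian.eq]
  · intro x hx
    have hSx : S *ᵥ x ≠ 0 := fun h => hx (eq_zero_of_mulVec_eq_zero hSdet h)
    have hpos := hB.dotProduct_mulVec_pos hSx
    have hrw : star x ⬝ᵥ (S * B * S) *ᵥ x = star (S *ᵥ x) ⬝ᵥ B *ᵥ (S *ᵥ x) := by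
      rw [← mulVec_mulVec, ← mulVec_mulVec, dotProduct_mulVec, star_mulVec, hS.eq]
    rw [hrw]
    exact hpos

/-- Legendre transform of the Wishart log-Laplace transform:
`sup_A { tr(QA) + ½ log det(1−2A) } = ½(tr Q − log det Q − D)`,
the sup over symmetric `A` with `1−2A ≻ 0`. -/
theorem stmt8 (D : ℕ) (Q : Matrix (Fin D) (Fin D) ℝ) (hQ : Q.PosDef) (hsym : Q.IsSymm) :
    IsLUB {x : ℝ | ∃ A : Matrix (Fin D) (Fin D) ℝ, A.IsSymm ∧
        ((1 : Matrix (Fin D) (Fin D) ℝ) - 2 • A).PosDef ∧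
        x = (Q * A).trace + (1 / 2) * Real.log ((1 - 2 • A).det)}
      ((1 / 2) * (Q.trace - Real.log Q.det - D)) := by
  have hdetQ : Q.det ≠ 0 := hQ.det_pos.ne'
  have hQunit : IsUnit Q.det := isUnit_iff_ne_zero.mpr hdetQ
  have h2 : ∀ M : Matrix (Fin D) (Fin D) ℝ, (2 : ℕ) • M = (2 : ℝ) • M := fun M => by
    rw [← Nat.cast_smul_eq_nsmul ℝ 2 M]
    norm_num
  -- the witness
  have hmem : (1 / 2) * (Q.trace - Real.log Q.det - D) ∈
      {x : ℝ | ∃ A : Matrix (Fin D) (Fin D) ℝ, A.IsSymm ∧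
        ((1 : Matrix (Fin D) (Fin D) ℝ) - 2 • A).PosDef ∧
        x = (Q * A).trace + (1 / 2) * Real.log ((1 - 2 • A).det)} := by
    have h1 : (1 : Matrix (Fin D) (Fin D) ℝ) - 2 • ((2⁻¹ : ℝ) • (1 - Q⁻¹)) = Q⁻¹ := by
      rw [h2, smul_smul]
      norm_num
    refine ⟨(2⁻¹ : ℝ) • (1 - Q⁻¹), ?_, ?_, ?_⟩
    · rw [Matrix.IsSymm, transpose_smul, transpose_sub, transpose_one, transpose_nonsing_inv,
        hsym]
    · rw [h1]
      exact hQ.inv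
    · rw [h1]
      have htrA : (Q * ((2⁻¹ : ℝ) • (1 - Q⁻¹))).trace = 2⁻¹ * (Q.trace - D) := by
        rw [Matrix.mul_smul, trace_smul, Matrix.mul_sub, mul_one,
          Matrix.mul_nonsing_inv Q hQunit, trace_sub, trace_one]
        simp [smul_eq_mul]
      rw [htrA, det_nonsing_inv, Ring.inverse_eq_inv', Real.log_inv]
      ring
  constructor
  · -- upper bound
    rintro x ⟨A, hAsym, hBpd, rfl⟩
    set B := (1 : Matrix (Fin D) (Fin D) ℝ) - 2 • A with hBdef
    have hA : A = (2⁻¹ : ℝ) • ((1 : Matrix (Fin D) (Fin D) ℝ) - B) := by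
      rw [hBdef, h2, sub_sub_cancel, smul_smul]
      norm_num
    -- square root of Q
    open scoped MatrixOrder in set S := CFC.sqrt Q with hSdef
    open scoped MatrixOrder in have hSS : S * S = Q := CFC.sqrt_mul_sqrt_self Q (nonneg_iff_posSemidef.mpr hQ.posSemidef)
    open scoped MatrixOrder in have hSH : S.IsHermitian := (nonneg_iff_posSemidef.mp (CFC.sqrt_nonneg Q)).isHermitian
    have hSdet : S.det ≠ 0 := by
      intro h
      have : Q.det = 0 := by rw [← hSS, det_mul, h, zero_mul]
      exact hdetQ this
    have hM : (S * B * S).PosDef := posDef_conj hSH hSdet hBpd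
    have hMtr : (S * B * S).trace = (Q * B).trace := by
      rw [trace_mul_cycle, hSS]
    have hQdetS : Q.det = S.det * S.det := by rw [← hSS, det_mul]
    have hMdet : (S * B * S).det = Q.det * B.det := by
      rw [det_mul, det_mul, hQdetS]
      ring
    have key := log_det_add_le_trace hM
    rw [hMtr, hMdet, Real.log_mul hdetQ hBpd.det_pos.ne'] at key
    have htrQA : (Q * A).trace = 2⁻¹ * (Q.trace - (Q * B).trace) := by
      rw [hA, Matrix.mul_smul, trace_smul, Matrix.mul_sub, mul_one, trace_sub]
      simp [smul_eq_mul]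
    rw [htrQA]
    linarith
  · -- least
    intro y hy
    exact hy hmem
end
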